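/- arXiv:2407.18398 — 5 statements merged into one kernel-verified Lean document; each statement's English description precedes it below -/
import Mathlib

section
/- Let p be a prime, q = p^m, γ a primitive element of F_q, and t_1, ..., t_s positive integers. There exist i with 1 ≤ i ≤ q-2 and α ∈ F_p^* such that γ^{i t_1} = γ^{i t_2} = ... = γ^{i t_s} and γ^{i t_1} = -α^{-1} ∈ F_p^* if and only if gcd(q-1, t_1(p-1), t_2 - t_1, ..., t_s - t_1) > 1. -/
/-!
As γ generates `F_q^*`, it has order `q - 1`, so `γ^a = γ^b` exactly when `q - 1 ∣ a - b`; and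
`F_p^*` is the set of solutions of `x^(p-1) = 1` in `F_q`. Hence the left side asks for some
`0 < i < q - 1` with `q - 1 ∣ i·g`, where `g = gcd(t_1(p-1), t_2 - t_1, …, t_s - t_1)`, and such an
`i` exists iff `gcd(q - 1, g) > 1` (take `i = (q - 1) / gcd(q - 1, g)`).
-/

open Polynomial in
theorem ZMod.exists_algebraMap_eq_of_pow_eq_self {p : ℕ} [Fact p.Prime] {K : Type*} [Field K]
    [Algebra (ZMod p) K] {x : K} (hx : x ^ p = x) : ∃ a : ZMod p, algebraMap (ZMod p) K a = x := by
  have hp : 1 < p := (Fact.out : p.Prime).one_lt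
  have hcard : Multiset.card (X ^ p - X : (ZMod p)[X]).roots =
      (X ^ p - X : (ZMod p)[X]).natDegree := by
    have := FiniteField.roots_X_pow_card_sub_X (ZMod p)
    rw [ZMod.card] at this
    rw [this, FiniteField.X_pow_card_sub_X_natDegree_eq _ hp, Finset.card_val, Finset.card_univ,
      ZMod.card]
  have hroots := roots_map_of_injective_of_card_eq_natDegree (algebraMap (ZMod p) K).injective hcard
  rw [Polynomial.map_sub, Polynomial.map_pow, map_X] at hroots
  have hmem : x ∈ (X ^ p - X : K[X]).roots := by
    rw [mem_roots (FiniteField.X_pow_card_sub_X_ne_zero K hp)]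
    simp [hx]
  obtain ⟨a, -, ha⟩ := Multiset.mem_map.mp (hroots ▸ hmem)
  exact ⟨a, ha⟩

theorem ZMod.pow_sub_one_eq_one_iff_exists_algebraMap_eq {p : ℕ} [Fact p.Prime] {K : Type*}
    [Field K] [Algebra (ZMod p) K] {x : K} :
    x ^ (p - 1) = 1 ↔ ∃ a : ZMod p, a ≠ 0 ∧ algebraMap (ZMod p) K a = x := by
  constructor
  · intro hx
    have hp : 1 < p := (Fact.out : p.Prime).one_lt
    have hx0 : x ≠ 0 := by
      rintro rfl
      rw [zero_pow (by omega)] at hx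
      exact zero_ne_one hx
    have hxp : x ^ p = x := by rw [← Nat.sub_add_cancel hp.le, pow_succ, hx, one_mul]
    obtain ⟨a, ha⟩ := ZMod.exists_algebraMap_eq_of_pow_eq_self hxp
    exact ⟨a, by rintro rfl; simp [eq_comm, hx0] at ha, ha⟩
  · rintro ⟨a, ha, rfl⟩
    rw [← map_pow, ZMod.pow_card_sub_one_eq_one ha, map_one]

theorem ne_zero_of_forall_ne_zero_exists_pow_eq {M₀ : Type*} [MonoidWithZero M₀] [Fintype M₀]
    (hcard : 2 < Fintype.card M₀) {γ : M₀} (hγ : ∀ x ≠ 0, ∃ k : ℕ, γ ^ k = x) : γ ≠ 0 := by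
  classical
  obtain ⟨x, -, hx⟩ := Finset.exists_mem_notMem_of_card_lt_card
    (s := {0, 1}) (t := Finset.univ) ((Finset.card_le_two).trans_lt hcard)
  rintro rfl
  obtain ⟨k, hk⟩ := hγ x (by rintro rfl; simp at hx)
  rcases k with _ | k <;> simp [← hk] at hx

theorem orderOf_eq_card_sub_one_of_forall_ne_zero_exists_pow_eq {G₀ : Type*} [GroupWithZero G₀]
    [Fintype G₀] {γ : G₀} (hγ0 : γ ≠ 0) (hγ : ∀ x ≠ 0, ∃ k : ℕ, γ ^ k = x) :
    orderOf γ = Fintype.card G₀ - 1 := by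
  classical
  rw [← Units.val_mk0 hγ0, orderOf_units, ← Fintype.card_units, ← Nat.card_eq_fintype_card]
  refine orderOf_eq_card_of_forall_mem_zpowers fun u => ?_
  obtain ⟨k, hk⟩ := hγ u u.ne_zero
  exact ⟨k, Units.ext (by simp [hk])⟩

theorem IsOfFinOrder.pow_eq_pow_iff_dvd_natAbs_sub {M : Type*} [Monoid M] {x : M}
    (hx : IsOfFinOrder x) {a b : ℕ} : x ^ a = x ^ b ↔ orderOf x ∣ ((a : ℤ) - b).natAbs := by
  rw [hx.pow_eq_pow_iff_modEq, Nat.modEq_iff_dvd, ← Int.natCast_dvd, dvd_sub_comm]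

theorem Nat.exists_pos_lt_dvd_mul_iff_one_lt_gcd {n g : ℕ} (hn : 0 < n) :
    (∃ i, 0 < i ∧ i < n ∧ n ∣ i * g) ↔ 1 < n.gcd g := by
  constructor
  · rintro ⟨i, hi0, hin, hdvd⟩
    by_contra! h
    have hcop : n.Coprime g := by
      have := Nat.gcd_pos_of_pos_left g hn
      unfold Nat.Coprime; omega
    exact absurd (Nat.le_of_dvd hi0 (hcop.dvd_of_dvd_mul_right hdvd)) (by omega)
  · intro h
    refine ⟨n / n.gcd g, Nat.div_pos (Nat.gcd_le_left g hn) (by omega),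
      Nat.div_lt_self hn h, ?_⟩
    simpa [Nat.div_mul_cancel (Nat.gcd_dvd_left n g)] using
      Nat.mul_dvd_mul_left (n / n.gcd g) (Nat.gcd_dvd_right n g)

theorem Nat.dvd_mul_gcd_finset_gcd_iff {ι : Type*} {s : Finset ι} {d : ι → ℕ} {n i c : ℕ} :
    n ∣ i * Nat.gcd c (s.gcd d) ↔ n ∣ i * c ∧ ∀ j ∈ s, n ∣ i * d j := by
  rw [← Nat.gcd_mul_left, Nat.dvd_gcd_iff, ← normalize_eq i, ← Finset.gcd_mul_left,
    Finset.dvd_gcd_iff, normalize_eq]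

theorem stmt_1_general (p m s : ℕ) [Fact p.Prime]
    (F : Type) [Field F] [Fintype F] [Algebra (ZMod p) F]
    (hcard : Fintype.card F = p ^ m)
    (γ : F) (hγ : ∀ x : F, x ≠ 0 → ∃ k : ℕ, γ ^ k = x)
    (t : Fin (s + 1) → ℕ) :
    (∃ i : ℕ, ∃ α : ZMod p, 1 ≤ i ∧ i ≤ p ^ m - 2 ∧ α ≠ 0 ∧
        (∀ j, γ ^ (i * t j) = γ ^ (i * t 0)) ∧
        γ ^ (i * t 0) = algebraMap (ZMod p) F (-α⁻¹)) ↔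
      1 < Nat.gcd (p ^ m - 1)
          (Nat.gcd (t 0 * (p - 1))
            (Finset.univ.gcd fun j : Fin (s + 1) => ((t j : ℤ) - (t 0 : ℤ)).natAbs)) := by
  have hq : 1 < p ^ m := hcard ▸ Fintype.one_lt_card
  -- for `q = 2`, `γ = 0` satisfies `hγ` since `0 ^ 0 = 1`
  rcases Nat.lt_or_ge (p ^ m) 3 with hq2 | hq3
  · refine iff_of_false (fun ⟨i, _, h1, h2, _⟩ => by omega) ?_
    rw [show p ^ m - 1 = 1 by omega, Nat.gcd_one_left]
    exact lt_irrefl 1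
  have hγ0 : γ ≠ 0 := ne_zero_of_forall_ne_zero_exists_pow_eq (by omega) hγ
  have hord : orderOf γ = p ^ m - 1 :=
    hcard ▸ orderOf_eq_card_sub_one_of_forall_ne_zero_exists_pow_eq hγ0 hγ
  have hfin : IsOfFinOrder γ := orderOf_pos_iff.mp (by omega)
  have hprime : ∀ a, (∃ α : ZMod p, α ≠ 0 ∧ γ ^ a = algebraMap (ZMod p) F (-α⁻¹)) ↔
      p ^ m - 1 ∣ a * (p - 1) := fun a => by
    rw [← hord, orderOf_dvd_iff_pow_eq_one, pow_mul,
      ZMod.pow_sub_one_eq_one_iff_exists_algebraMap_eq]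
    refine ⟨fun ⟨α, hα, h⟩ => ⟨-α⁻¹, by simpa using hα, h.symm⟩,
      fun ⟨a, ha, h⟩ => ⟨-a⁻¹, by simpa using ha, by rw [inv_neg, inv_inv, neg_neg, h]⟩⟩
  have hdiff : ∀ i j, γ ^ (i * t j) = γ ^ (i * t 0) ↔
      p ^ m - 1 ∣ i * ((t j : ℤ) - (t 0 : ℤ)).natAbs := fun i j => by
    rw [hfin.pow_eq_pow_iff_dvd_natAbs_sub, hord, Nat.cast_mul, Nat.cast_mul, ← mul_sub,
      Int.natAbs_mul, Int.natAbs_natCast]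
  rw [← Nat.exists_pos_lt_dvd_mul_iff_one_lt_gcd (by omega)]
  refine exists_congr fun i => ?_
  simp only [Nat.dvd_mul_gcd_finset_gcd_iff, Finset.mem_univ, true_imp_iff, ← mul_assoc,
    ← hprime, hdiff]
  constructor
  · rintro ⟨α, hi1, hi2, hα, hj, h0⟩
    exact ⟨by omega, by omega, ⟨α, hα, h0⟩, hj⟩
  · rintro ⟨hi1, hi2, ⟨α, hα, h0⟩, hj⟩
    exact ⟨α, by omega, by omega, hα, hj, h0⟩

/-- existence of `i`, `α` with `γ^{i t_1} = ⋯ = γ^{i t_s} = -α⁻¹ ∈ F_p^*`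
iff `gcd(q-1, t_1(p-1), t_2 - t_1, …, t_s - t_1) > 1`. -/
theorem stmt_1 (p m s : ℕ) [Fact p.Prime] (hm : 0 < m)
    (F : Type) [Field F] [Fintype F] [Algebra (ZMod p) F]
    (hcard : Fintype.card F = p ^ m)
    (γ : F) (hγ : ∀ x : F, x ≠ 0 → ∃ k : ℕ, γ ^ k = x)
    (t : Fin (s + 1) → ℕ) (ht : ∀ j, 0 < t j) :
    (∃ i : ℕ, ∃ α : ZMod p, 1 ≤ i ∧ i ≤ p ^ m - 2 ∧ α ≠ 0 ∧
        (∀ j, γ ^ (i * t j) = γ ^ (i * t 0)) ∧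
        γ ^ (i * t 0) = algebraMap (ZMod p) F (-α⁻¹)) ↔
      1 < Nat.gcd (p ^ m - 1)
          (Nat.gcd (t 0 * (p - 1))
            (Finset.univ.gcd fun j : Fin (s + 1) => ((t j : ℤ) - (t 0 : ℤ)).natAbs)) :=
  stmt_1_general p m s F hcard γ hγ t
end

section
/- Let p be an odd prime, g a positive integer, and β a primitive element of F_{p^g}. The number of tuples (a, b, i, j) with a, b ∈ F_p^*, 1 ≤ i, j ≤ p^g - 2, i ≠ j, satisfying 1 + a·β^i + b·β^j = 0 equals (p-1)^2 (p^g - 2) - (p-2)(3p - 5). -/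
/-!
Put `q = |F|`. Since `β` generates `Fˣ`, `i ↦ β ^ i` identifies `{1, …, q - 2}` with `F \ {0, 1}`,
so one counts `(a, b, x, y)` with `x, y ∉ {0, 1}`, `x ≠ y` and `1 + a x + b y = 0`. For fixed
`a, b` the equation determines `y = -(1 + a x) / b`, and the `x ∉ {0, 1}` lost because `y ∈ {0, 1, x}`
are among `-1/a`, `-(1 + b)/a`, `-1/(a + b)`; which of them count depends only on whether `a`, `b`,
`a + b` lie in `{0, -1}`.
-/

open Finset

section PrimitiveElement

variable {F : Type*} [Field F] [Fintype F] {β : F}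

theorem isPrimitiveRoot_of_forall_exists_pow (hβ0 : β ≠ 0)
    (hβ : ∀ x : F, x ≠ 0 → ∃ k : ℕ, β ^ k = x) :
    IsPrimitiveRoot β (Fintype.card F - 1) := by
  classical
  rw [← Fintype.card_units, ← Nat.card_eq_fintype_card, ← Units.val_mk0 hβ0,
    IsPrimitiveRoot.coe_units_iff, ← orderOf_eq_card_of_forall_mem_powers]
  · exact IsPrimitiveRoot.orderOf _
  · intro x
    obtain ⟨k, hk⟩ := hβ x x.ne_zero
    exact ⟨k, Units.ext (by simpa using hk)⟩

theorem bijOn_pow_Icc_of_forall_exists_pow (hβ : ∀ x : F, x ≠ 0 → ∃ k : ℕ, β ^ k = x) :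
    Set.BijOn (β ^ ·) (Set.Icc 1 (Fintype.card F - 2)) {x | x ≠ 0 ∧ x ≠ 1} := by
  obtain rfl | hβ0 := eq_or_ne β 0
  · -- only `𝔽₂` has the generator `0`, and then both sets are empty
    have hF : ∀ x : F, x = 0 ∨ x = 1 := fun x ↦ by
      obtain rfl | hx := eq_or_ne x 0
      · exact .inl rfl
      obtain ⟨k, rfl⟩ := hβ x hx
      rcases k with _ | k <;> simp
    have hcard : Fintype.card F ≤ 2 := by
      classical
      calc Fintype.card F ≤ ({0, 1} : Finset F).card :=
            card_le_card fun x _ ↦ by simpa using hF x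
        _ ≤ 2 := card_le_two
    rw [Set.Icc_eq_empty (by omega), Set.eq_empty_of_forall_notMem (s := {x : F | _})
      (fun x hx ↦ by rcases hF x with h | h <;> simp_all)]
    exact Set.bijOn_empty _
  have hprim := isPrimitiveRoot_of_forall_exists_pow hβ0 hβ
  have hq : 1 < Fintype.card F := Fintype.one_lt_card
  refine ⟨fun i hi ↦ ⟨pow_ne_zero _ hβ0, hprim.pow_ne_one_of_pos_of_lt (by grind) (by grind)⟩,
    fun i hi j hj hij ↦ hprim.pow_inj (by grind) (by grind) hij, fun x ⟨hx0, hx1⟩ ↦ ?_⟩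
  have : NeZero (Fintype.card F - 1) := ⟨by omega⟩
  obtain ⟨i, hi, rfl⟩ := hprim.eq_pow_of_pow_eq_one (FiniteField.pow_card_sub_one_eq_one x hx0)
  refine ⟨i, ⟨Nat.one_le_iff_ne_zero.mpr ?_, by omega⟩, rfl⟩
  rintro rfl
  exact hx1 (pow_zero β)

end PrimitiveElement

section AffineCount

variable {F : Type*} [Field F]

theorem linear_forms_ne_zero_iff {A B x y : F} (hB : B ≠ 0) (h : 1 + A * x + B * y = 0) :
    (1 + A * x ≠ 0 ∧ 1 + B + A * x ≠ 0 ∧ 1 + (A + B) * x ≠ 0) ↔ (y ≠ 0 ∧ y ≠ 1 ∧ y ≠ x) := by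
  rw [show 1 + A * x = -(B * y) by linear_combination h,
    show 1 + B + A * x = B * (1 - y) by linear_combination h,
    show 1 + (A + B) * x = B * (x - y) by linear_combination h]
  simp only [ne_eq, neg_eq_zero, mul_eq_zero, hB, false_or, sub_eq_zero, eq_comm (a := (1 : F)),
    eq_comm (a := x)]

variable [DecidableEq F]

theorem card_filter_add_mul_eq_zero (s : Finset F) (c : F) {d : F} (hd : d ≠ 0) :
    #{x ∈ s | c + d * x = 0} = if -c / d ∈ s then 1 else 0 := by
  have hroot : ∀ x, c + d * x = 0 ↔ -c / d = x := fun x ↦ by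
    rw [div_eq_iff hd, eq_comm]
    constructor <;> intro h <;> linear_combination h
  simp only [hroot, filter_eq]
  split_ifs <;> simp

/-- The number of `x ∉ {0, 1}` at which the solution `y` of `1 + A x + B y = 0` lies in
`{0, 1, x}`: these `x` are `-1/A`, `-(1 + B)/A` and (if `A + B ≠ 0`) `-1/(A + B)`. -/
def excludedCount (A B : F) : ℤ :=
  (if A ≠ -1 then 1 else 0) + (if B ≠ -1 ∧ A + B ≠ -1 then 1 else 0) +
    (if A + B ≠ 0 ∧ A + B ≠ -1 then 1 else 0)

theorem excludedCount_map {K : Type*} [Field K] [DecidableEq K] (f : K →+* F) (a b : K) :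
    excludedCount (f a) (f b) = excludedCount a b := by
  simp only [excludedCount, ← map_add, ← map_one f, ← map_neg, f.injective.ne_iff, map_ne_zero]

theorem excludedCount_eq_of_ne_zero {A : F} (hA : A ≠ 0) (B : F) :
    excludedCount A B = 3 - (if A = -1 then 1 else 0) - (if B = -1 then 1 else 0) -
      (if B = -A then 1 else 0) - 2 * (if B = -1 - A then 1 else 0) := by
  have h1 : B = -1 → B ≠ -1 - A := fun h h' ↦ hA (by linear_combination h' - h)
  have h2 : B = -A → B ≠ -1 - A := fun h h' ↦
    one_ne_zero (by linear_combination h' - h : (1 : F) = 0)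
  simp only [excludedCount]
  split_ifs <;> grind

variable [Fintype F]

/-- The `x ∉ {0, 1}` for which the solution `y` of `1 + A x + B y = 0` avoids `0`, `1` and `x`. -/
def admissibleSet (A B : F) : Finset F :=
  {x | x ≠ 0 ∧ x ≠ 1 ∧ 1 + A * x ≠ 0 ∧ 1 + B + A * x ≠ 0 ∧ 1 + (A + B) * x ≠ 0}

theorem card_filter_ne_zero_ne_one : #{x : F | x ≠ 0 ∧ x ≠ 1} = Fintype.card F - 2 := by
  rw [← card_pair (zero_ne_one (α := F)), ← card_compl]
  congr 1
  ext x
  simp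

theorem card_admissibleSet_add_card_filter {A B : F} (hB : B ≠ 0) :
    let s : Finset F := {x | x ≠ 0 ∧ x ≠ 1}
    (#(admissibleSet A B) : ℤ) + #{x ∈ s | 1 + A * x = 0} + #{x ∈ s | 1 + B + A * x = 0} +
      #{x ∈ s | 1 + (A + B) * x = 0} = #s := by
  intro s
  have hsplit : ∀ x ∈ s, (1 : ℤ) =
      (if 1 + A * x ≠ 0 ∧ 1 + B + A * x ≠ 0 ∧ 1 + (A + B) * x ≠ 0 then 1 else 0) +
      (if 1 + A * x = 0 then 1 else 0) + (if 1 + B + A * x = 0 then 1 else 0) +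
      (if 1 + (A + B) * x = 0 then 1 else 0) := by
    intro x hx
    obtain ⟨hx0, hx1⟩ : x ≠ 0 ∧ x ≠ 1 := by simpa [s] using hx
    have h12 : 1 + A * x = 0 → 1 + B + A * x ≠ 0 := fun h h' ↦ hB (by linear_combination h' - h)
    have h13 : 1 + A * x = 0 → 1 + (A + B) * x ≠ 0 := fun h h' ↦
      mul_ne_zero hB hx0 (by linear_combination h' - h)
    have h23 : 1 + B + A * x = 0 → 1 + (A + B) * x ≠ 0 := fun h h' ↦
      mul_ne_zero hB (sub_ne_zero.mpr hx1) (by linear_combination h' - h)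
    split_ifs <;> grind
  rw [card_eq_sum_ones s, Nat.cast_sum, Nat.cast_one, sum_congr rfl hsplit]
  simp only [sum_add_distrib, sum_boole, admissibleSet, s, filter_filter, and_assoc]

theorem card_admissibleSet {A B : F} (hA : A ≠ 0) (hB : B ≠ 0) :
    (#(admissibleSet A B) : ℤ) = (Fintype.card F - 2 : ℕ) - excludedCount A B := by
  have hcard := card_admissibleSet_add_card_filter (A := A) hB
  dsimp only at hcard
  set s : Finset F := {x : F | x ≠ 0 ∧ x ≠ 1}
  have hmem : ∀ x, x ∈ s ↔ x ≠ 0 ∧ x ≠ 1 := fun x ↦ by simp [s]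
  have h1 : -1 / A ∈ s ↔ A ≠ -1 := by
    simp only [hmem, ne_eq, div_eq_one_iff_eq hA, div_eq_zero_iff]
    grind
  have h2 : -(1 + B) / A ∈ s ↔ B ≠ -1 ∧ A + B ≠ -1 := by
    simp only [hmem, ne_eq, div_eq_one_iff_eq hA, div_eq_zero_iff]
    grind
  have h3 : (#{x ∈ s | 1 + (A + B) * x = 0} : ℤ) = if A + B ≠ 0 ∧ A + B ≠ -1 then 1 else 0 := by
    obtain hAB | hAB := eq_or_ne (A + B) 0
    · simp [hAB]
    have hmem3 : -1 / (A + B) ∈ s ↔ A + B ≠ -1 := by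
      simp only [hmem, ne_eq, div_eq_one_iff_eq hAB, div_eq_zero_iff]
      grind
    rw [card_filter_add_mul_eq_zero s 1 hAB]
    simp only [hmem3, hAB, ne_eq, not_false_eq_true, true_and]
    split_ifs <;> rfl
  rw [card_filter_add_mul_eq_zero s 1 hA, card_filter_add_mul_eq_zero s (1 + B) hA,
    card_filter_ne_zero_ne_one, h3] at hcard
  simp only [h1, h2] at hcard
  simp only [excludedCount]
  push_cast at hcard ⊢
  linarith

theorem sum_excludedCount :
    ∑ a ∈ univ.erase (0 : F), ∑ b ∈ univ.erase (0 : F), excludedCount a b =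
      ((Fintype.card F : ℤ) - 2) * (3 * Fintype.card F - 5) := by
  have hcard : ((univ.erase (0 : F)).card : ℤ) = Fintype.card F - 1 := by
    rw [card_erase_of_mem (mem_univ _), card_univ, Nat.cast_sub Fintype.card_pos, Nat.cast_one]
  have hinner : ∀ a ∈ univ.erase (0 : F), ∑ b ∈ univ.erase 0, excludedCount a b =
      3 * Fintype.card F - 7 - (Fintype.card F - 3) * (if a = -1 then 1 else 0) := by
    intro a ha
    have ha : a ≠ 0 := ne_of_mem_erase ha
    have hne : -1 - a ≠ 0 ↔ a ≠ -1 := by grind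
    simp only [excludedCount_eq_of_ne_zero ha, sum_sub_distrib, sum_const, ← mul_sum,
      sum_ite_eq', mem_erase, mem_univ, and_true, ne_eq, neg_eq_zero, one_ne_zero, ha, hne,
      not_false_eq_true, if_true, nsmul_eq_mul, hcard]
    split_ifs <;> ring
  rw [sum_congr rfl hinner]
  simp only [sum_sub_distrib, sum_const, ← mul_sum, sum_ite_eq', mem_erase, mem_univ, and_true,
    ne_eq, neg_eq_zero, one_ne_zero, not_false_eq_true, if_true, nsmul_eq_mul, hcard]
  ring

theorem card_filter_pairs_eq_card_admissibleSet {ι : Type*} [DecidableEq ι] {e : ι → F}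
    {I : Finset ι} (he : Set.BijOn e I {x | x ≠ 0 ∧ x ≠ 1}) {A B : F} (hB : B ≠ 0) :
    #{ij ∈ I ×ˢ I | ij.1 ≠ ij.2 ∧ 1 + A * e ij.1 + B * e ij.2 = 0} = #(admissibleSet A B) := by
  apply card_bij (fun ij _ ↦ e ij.1)
  · rintro ⟨i, j⟩ hij
    simp only [mem_filter, mem_product] at hij
    obtain ⟨⟨hi, hj⟩, hne, h⟩ := hij
    obtain ⟨hx0, hx1⟩ := he.mapsTo hi
    obtain ⟨hy0, hy1⟩ := he.mapsTo hj
    have hyx : e j ≠ e i := fun h' ↦ hne (he.injOn hi hj h'.symm)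
    simpa [admissibleSet, hx0, hx1] using (linear_forms_ne_zero_iff hB h).mpr ⟨hy0, hy1, hyx⟩
  · rintro ⟨i, j⟩ hij ⟨i', j'⟩ hij' (hii' : e i = e i')
    simp only [mem_filter, mem_product] at hij hij'
    obtain rfl : i = i' := he.injOn hij.1.1 hij'.1.1 hii'
    have hjj' : e j = e j' := mul_left_cancel₀ hB (by linear_combination hij.2.2 - hij'.2.2)
    rw [he.injOn hij.1.2 hij'.1.2 hjj']
  · intro x hx
    simp only [admissibleSet, mem_filter, mem_univ, true_and] at hx
    obtain ⟨hx0, hx1, hgood⟩ := hx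
    set y := -(1 + A * x) / B
    have hy : 1 + A * x + B * y = 0 := by
      simp only [y]
      field_simp
      ring
    obtain ⟨hy0, hy1, hyx⟩ := (linear_forms_ne_zero_iff hB hy).mp hgood
    obtain ⟨i, hi, rfl⟩ := he.surjOn ⟨hx0, hx1⟩
    obtain ⟨j, hj, hjy⟩ := he.surjOn ⟨hy0, hy1⟩
    refine ⟨(i, j), ?_, rfl⟩
    simp only [mem_filter, mem_product]
    exact ⟨⟨hi, hj⟩, fun hij ↦ hyx (by rw [← hjy, hij]), by rw [hjy]; exact hy⟩

end AffineCount

theorem stmt_6_general (p g : ℕ) [Fact p.Prime]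
    (F : Type) [Field F] [Fintype F] [Algebra (ZMod p) F]
    (hcard : Fintype.card F = p ^ g)
    (β : F) (hβ : ∀ x : F, x ≠ 0 → ∃ k : ℕ, β ^ k = x) :
    (Nat.card {x : ZMod p × ZMod p × ℕ × ℕ //
        x.1 ≠ 0 ∧ x.2.1 ≠ 0 ∧
        1 ≤ x.2.2.1 ∧ x.2.2.1 ≤ p ^ g - 2 ∧
        1 ≤ x.2.2.2 ∧ x.2.2.2 ≤ p ^ g - 2 ∧
        x.2.2.1 ≠ x.2.2.2 ∧
        1 + algebraMap (ZMod p) F x.1 * β ^ x.2.2.1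
          + algebraMap (ZMod p) F x.2.1 * β ^ x.2.2.2 = 0} : ℤ)
      = ((p : ℤ) - 1) ^ 2 * ((p : ℤ) ^ g - 2) - ((p : ℤ) - 2) * (3 * (p : ℤ) - 5) := by
  classical
  set I := Icc 1 (Fintype.card F - 2)
  set f := algebraMap (ZMod p) F
  have hpairs : ∀ a ∈ univ.erase (0 : ZMod p), ∀ b ∈ univ.erase (0 : ZMod p),
      (#{ij ∈ I ×ˢ I | ij.1 ≠ ij.2 ∧ 1 + f a * β ^ ij.1 + f b * β ^ ij.2 = 0} : ℤ) =
        (Fintype.card F - 2 : ℕ) - excludedCount a b := fun a ha b hb ↦ by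
    have hfa : f a ≠ 0 := (map_ne_zero f).mpr (ne_of_mem_erase ha)
    have hfb : f b ≠ 0 := (map_ne_zero f).mpr (ne_of_mem_erase hb)
    rw [card_filter_pairs_eq_card_admissibleSet
      (by rw [coe_Icc]; exact bijOn_pow_Icc_of_forall_exists_pow hβ) hfb,
      card_admissibleSet hfa hfb, excludedCount_map]
  rw [Nat.subtype_card {x ∈ univ.erase 0 ×ˢ univ.erase 0 ×ˢ I ×ˢ I |
      x.2.2.1 ≠ x.2.2.2 ∧ 1 + f x.1 * β ^ x.2.2.1 + f x.2.1 * β ^ x.2.2.2 = 0}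
      (fun x ↦ by simp [I, hcard]; tauto), card_filter, sum_product]
  simp_rw [sum_product (s := univ.erase (0 : ZMod p)) (t := I ×ˢ I), ← card_filter]
  push_cast
  rw [sum_congr rfl fun a ha ↦ sum_congr rfl (hpairs a ha)]
  simp only [sum_sub_distrib, sum_const, sum_excludedCount, card_erase_of_mem (mem_univ _),
    card_univ, ZMod.card, nsmul_eq_mul]
  have hq : 2 ≤ p ^ g := hcard ▸ Fintype.one_lt_card
  have hp1 : 1 ≤ p := (Fact.out : p.Prime).one_le
  rw [hcard]
  push_cast [Nat.cast_sub hq, Nat.cast_sub hp1]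
  ring

/-- for an odd prime `p` and a primitive element `β` of `F_{p^g}`, the number of
tuples `(a,b,i,j)` with `a,b ∈ F_p^*`, `1 ≤ i,j ≤ p^g - 2`, `i ≠ j` and
`1 + a·β^i + b·β^j = 0` equals `(p-1)²(p^g-2) - (p-2)(3p-5)`. -/
theorem stmt_6 (p g : ℕ) [Fact p.Prime] (hp : Odd p) (hg : 0 < g)
    (F : Type) [Field F] [Fintype F] [Algebra (ZMod p) F]
    (hcard : Fintype.card F = p ^ g)
    (β : F) (hβ : ∀ x : F, x ≠ 0 → ∃ k : ℕ, β ^ k = x) :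
    (Nat.card {x : ZMod p × ZMod p × ℕ × ℕ //
        x.1 ≠ 0 ∧ x.2.1 ≠ 0 ∧
        1 ≤ x.2.2.1 ∧ x.2.2.1 ≤ p ^ g - 2 ∧
        1 ≤ x.2.2.2 ∧ x.2.2.2 ≤ p ^ g - 2 ∧
        x.2.2.1 ≠ x.2.2.2 ∧
        1 + algebraMap (ZMod p) F x.1 * β ^ x.2.2.1
          + algebraMap (ZMod p) F x.2.1 * β ^ x.2.2.2 = 0} : ℤ)
      = ((p : ℤ) - 1) ^ 2 * ((p : ℤ) ^ g - 2) - ((p : ℤ) - 2) * (3 * (p : ℤ) - 5) :=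
  stmt_6_general p g F hcard β hβ
end

section
/- Let q = 2^m, γ a primitive element of F_q, t a positive integer, and C_{1,t} the binary cyclic code of length n = q - 1 consisting of words c with c(γ) = c(γ^t) = 0. Then C_{1,t} contains a codeword of Hamming weight 3 if and only if the polynomial U_t(x) = 1 + x^t + (1+x)^t ∈ F_2[x] has a root in F_q \ {0, 1}. -/
/-!
Since `γ` is primitive, `i ↦ γ ^ i` is a bijection from `{0, …, q - 2}` onto `Fˣ`, so a binary
word of weight three in `C_{1,t}` is the same as a three-element set `{u, v, w} ⊆ Fˣ` with
`u + v + w = 0` and `u ^ t + v ^ t + w ^ t = 0`. In characteristic two the first equation says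
`w = u + v`, and dividing the second by `u ^ t` gives `U_t (v / u) = 0`, where `v / u ∉ {0, 1}`.
Conversely a root `x` yields the set `{1, x, 1 + x}`.
-/

open Finset

theorem sum_algebraMap_zmod_two_mul {ι A : Type*} [Fintype ι] [Semiring A] [Algebra (ZMod 2) A]
    (c : ι → ZMod 2) (g : ι → A) :
    ∑ i, algebraMap (ZMod 2) A (c i) * g i = ∑ i ∈ univ.filter (c · ≠ 0), g i := by
  rw [sum_filter]
  refine sum_congr rfl fun i _ => ?_
  rcases (by decide : ∀ a : ZMod 2, a = 0 ∨ a = 1) (c i) with h | h <;> simp [h]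

theorem exists_zmod_two_iff_exists_finset {ι : Type*} [Fintype ι] [DecidableEq ι]
    (P : Finset ι → Prop) : (∃ c : ι → ZMod 2, P (univ.filter (c · ≠ 0))) ↔ ∃ s, P s := by
  refine ⟨fun ⟨c, hc⟩ => ⟨_, hc⟩, fun ⟨s, hs⟩ => ⟨fun i => if i ∈ s then 1 else 0, ?_⟩⟩
  convert hs
  ext i
  by_cases hi : i ∈ s <;> simp [hi]

theorem exists_finset_image_iff {α β : Type*} [Fintype α] [DecidableEq β] (f : α → β)
    (P : Finset β → Prop) : (∃ s : Finset α, P (s.image f)) ↔ ∃ t ⊆ univ.image f, P t := by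
  refine ⟨fun ⟨s, hs⟩ => ⟨_, image_subset_image (subset_univ s), hs⟩, fun ⟨t, ht, hPt⟩ => ?_⟩
  obtain ⟨s, rfl⟩ := subset_univ_image_iff.1 ht
  exact ⟨s, hPt⟩

namespace FiniteField

variable {F : Type*} [Field F] [Fintype F] {γ : F}

theorem exists_pow_fin_eq (hγ : ∀ x : F, x ≠ 0 → ∃ k : ℕ, γ ^ k = x) {x : F} (hx : x ≠ 0) :
    ∃ i : Fin (Fintype.card F - 1), γ ^ (i : ℕ) = x := by
  have hq : 0 < Fintype.card F - 1 := Nat.sub_pos_of_lt Fintype.one_lt_card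
  obtain ⟨k, rfl⟩ := hγ x hx
  -- `γ = 0` is possible when `q = 2`, but then only `k = 0` occurs.
  rcases eq_or_ne k 0 with rfl | hk
  · exact ⟨⟨0, hq⟩, rfl⟩
  · exact ⟨⟨k % _, Nat.mod_lt _ hq⟩,
      (pow_eq_pow_mod k (pow_card_sub_one_eq_one γ (ne_zero_pow hk hx))).symm⟩

variable [DecidableEq F]

theorem image_pow_fin_eq_erase_zero (hγ : ∀ x : F, x ≠ 0 → ∃ k : ℕ, γ ^ k = x) :
    univ.image (fun i : Fin (Fintype.card F - 1) => γ ^ (i : ℕ)) = univ.erase 0 := by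
  refine (eq_of_subset_of_card_le (fun x hx => ?_) ?_).symm
  · obtain ⟨i, hi⟩ := exists_pow_fin_eq hγ (ne_of_mem_erase hx)
    exact mem_image.2 ⟨i, mem_univ _, hi⟩
  · rw [card_erase_of_mem (mem_univ _), card_univ]
    exact card_image_le.trans (card_fin _).le

theorem injective_pow_fin (hγ : ∀ x : F, x ≠ 0 → ∃ k : ℕ, γ ^ k = x) :
    Function.Injective fun i : Fin (Fintype.card F - 1) => γ ^ (i : ℕ) := by
  rw [← Set.injOn_univ, ← coe_univ, ← card_image_iff, image_pow_fin_eq_erase_zero hγ,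
    card_erase_of_mem (mem_univ _), card_univ, card_univ, Fintype.card_fin]

end FiniteField

theorem CharTwo.exists_card_three_sum_pow_eq_zero_iff {F : Type*} [Field F] [CharP F 2]
    [DecidableEq F] (t : ℕ) :
    (∃ S : Finset F, 0 ∉ S ∧ ∑ y ∈ S, y = 0 ∧ ∑ y ∈ S, y ^ t = 0 ∧ #S = 3) ↔
      ∃ x : F, x ≠ 0 ∧ x ≠ 1 ∧ 1 + x ^ t + (1 + x) ^ t = 0 := by
  constructor
  · rintro ⟨S, h0, hsum, hsumt, hcard⟩
    obtain ⟨u, v, w, huv, huw, hvw, rfl⟩ := card_eq_three.1 hcard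
    simp only [mem_insert, mem_singleton, not_or] at h0
    obtain ⟨hu, hv, -⟩ := h0
    rw [sum_insert (by simp [huv, huw]), sum_pair hvw] at hsum hsumt
    have hw : w = u + v := by linear_combination hsum - (u + v) * CharTwo.two_eq_zero (R := F)
    have hx : 1 + v / u = w / u := by rw [hw]; field_simp
    refine ⟨v / u, div_ne_zero (Ne.symm hv) (Ne.symm hu),
      fun h => huv ((div_eq_one_iff_eq (Ne.symm hu)).1 h).symm, ?_⟩
    rw [hx, div_pow, div_pow]
    field_simp
    linear_combination hsumt
  · rintro ⟨x, hx0, hx1, hU⟩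
    have h1x : 1 + x ≠ 0 := fun h => hx1 (by linear_combination h - CharTwo.two_eq_zero (R := F))
    have h1 : (1 : F) ≠ x := Ne.symm hx1
    have h2 : (1 : F) ≠ 1 + x := fun h => hx0 (by linear_combination -h)
    have h3 : x ≠ 1 + x := fun h => one_ne_zero (by linear_combination -h)
    refine ⟨{1, x, 1 + x}, ?_, ?_, ?_, card_eq_three.2 ⟨1, x, 1 + x, h1, h2, h3, rfl⟩⟩
    · simp [hx0.symm, h1x.symm]
    · rw [sum_insert (by simp [h1, h2]), sum_pair h3]
      linear_combination (1 + x) * CharTwo.two_eq_zero (R := F)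
    · rw [sum_insert (by simp [h1, h2]), sum_pair h3, one_pow, ← add_assoc]
      exact hU

open Polynomial in
theorem stmt_7_general (m t : ℕ)
    (F : Type) [Field F] [Fintype F] [Algebra (ZMod 2) F]
    (hcard : Fintype.card F = 2 ^ m)
    (γ : F) (hγ : ∀ x : F, x ≠ 0 → ∃ k : ℕ, γ ^ k = x)
    (n : ℕ) (hn : n = 2 ^ m - 1) :
    (∃ c : Fin n → ZMod 2,
        (∑ i : Fin n, algebraMap (ZMod 2) F (c i) * γ ^ (i : ℕ) = 0) ∧
        (∑ i : Fin n, algebraMap (ZMod 2) F (c i) * γ ^ (t * (i : ℕ)) = 0) ∧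
        (Finset.univ.filter fun i => c i ≠ 0).card = 3) ↔
      ∃ x : F, x ≠ 0 ∧ x ≠ 1 ∧
        Polynomial.aeval x (1 + X ^ t + (1 + X) ^ t : Polynomial (ZMod 2)) = 0 := by
  classical
  have : CharP F 2 := charP_of_injective_algebraMap (algebraMap (ZMod 2) F).injective 2
  obtain rfl : n = Fintype.card F - 1 := hcard ▸ hn
  have hf := FiniteField.injective_pow_fin hγ
  let Q : Finset F → Prop := fun S => ∑ y ∈ S, y = 0 ∧ ∑ y ∈ S, y ^ t = 0 ∧ #S = 3
  calc _ ↔ ∃ s : Finset (Fin (Fintype.card F - 1)),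
        ∑ i ∈ s, γ ^ (i : ℕ) = 0 ∧ ∑ i ∈ s, γ ^ (t * (i : ℕ)) = 0 ∧ #s = 3 := by
        simp only [sum_algebraMap_zmod_two_mul]
        exact exists_zmod_two_iff_exists_finset
          fun s : Finset (Fin _) =>
            ∑ i ∈ s, γ ^ (i : ℕ) = 0 ∧ ∑ i ∈ s, γ ^ (t * (i : ℕ)) = 0 ∧ #s = 3
    _ ↔ ∃ s : Finset (Fin (Fintype.card F - 1)), Q (s.image fun i : Fin _ => γ ^ (i : ℕ)) := by
        simp only [Q, sum_image hf.injOn, card_image_of_injective _ hf, pow_mul']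
    _ ↔ ∃ S : Finset F, 0 ∉ S ∧ Q S := by
        rw [exists_finset_image_iff, FiniteField.image_pow_fin_eq_erase_zero hγ]
        simp only [subset_erase, subset_univ, true_and]
    _ ↔ _ := by
        rw [CharTwo.exists_card_three_sum_pow_eq_zero_iff]
        simp

open Polynomial in
/-- `C_{1,t}` has a weight-3 codeword iff `U_t(x) = 1 + x^t + (1+x)^t` has a
root in `F_q \ {0,1}`. -/
theorem stmt_7 (m t : ℕ) (hm : 0 < m) (ht : 0 < t)
    (F : Type) [Field F] [Fintype F] [Algebra (ZMod 2) F]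
    (hcard : Fintype.card F = 2 ^ m)
    (γ : F) (hγ : ∀ x : F, x ≠ 0 → ∃ k : ℕ, γ ^ k = x)
    (n : ℕ) (hn : n = 2 ^ m - 1) :
    (∃ c : Fin n → ZMod 2,
        (∑ i : Fin n, algebraMap (ZMod 2) F (c i) * γ ^ (i : ℕ) = 0) ∧
        (∑ i : Fin n, algebraMap (ZMod 2) F (c i) * γ ^ (t * (i : ℕ)) = 0) ∧
        (Finset.univ.filter fun i => c i ≠ 0).card = 3) ↔
      ∃ x : F, x ≠ 0 ∧ x ≠ 1 ∧
        Polynomial.aeval x (1 + X ^ t + (1 + X) ^ t : Polynomial (ZMod 2)) = 0 :=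
  stmt_7_general m t F hcard γ hγ n hn
end

section
/- Let q = 2^m and t a positive integer such that the binary cyclic code C_{1,t} of length q - 1 has no codewords of weight 1 or 2. Then the number of codewords of Hamming weight 3 in C_{1,t} equals (q-1)·(deg(gcd(U_t(x), x^q + x)) - 2)/6, where U_t(x) = 1 + x^t + (1+x)^t ∈ F_2[x]. -/
/-!
Under `i ↦ γ ^ i`, the supports of the weight-3 codewords become the 3-subsets `{a, b, c}` of
`Fˣ` with `a + b + c = 0` and `a ^ t + b ^ t + c ^ t = 0`. In characteristic 2 such a set is
`{a, b, a + b}` for any two distinct elements `a, b` of it, so six times the number of these sets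
is the number of ordered pairs `(a, b)` of distinct nonzero elements with
`a ^ t + b ^ t + (a + b) ^ t = 0`. Writing `b = a * w` turns this condition into
`a ^ t * U_t(w) = 0`, so there are `(q - 1)` such pairs for each root `w ∉ {0, 1}` of `U_t`.
Finally `X ^ q - X = X ^ q + X` is separable and splits over `F` with root set `F`, so the gcd has
exactly the roots of `U_t` in `F` as its roots, all simple; `0` and `1` are among them.
-/

open Polynomial Finset

theorem natDegree_gcd_X_pow_card_sub_X {K F : Type*} [Field K] [Field F] [Fintype F]
    [Algebra K F] [DecidableEq K] [DecidableEq F] (U : K[X]) :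
    (EuclideanDomain.gcd U (X ^ Fintype.card F - X)).natDegree = #{w : F | aeval w U = 0} := by
  set P : K[X] := X ^ Fintype.card F - X
  set g := EuclideanDomain.gcd U P with hg
  have hPF : P.map (algebraMap K F) = X ^ Fintype.card F - X := by simp [P]
  have hq : 1 < Fintype.card F := Fintype.one_lt_card
  have hP0 : P.map (algebraMap K F) ≠ 0 := hPF ▸ FiniteField.X_pow_card_sub_X_ne_zero F hq
  have hPsep : P.Separable := by
    rw [← separable_map (algebraMap K F), hPF]
    obtain ⟨p, _⟩ := CharP.exists F
    exact galois_poly_separable p _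
      ((CharP.cast_eq_zero_iff F p _).mp (FiniteField.cast_card_eq_zero F))
  have hPsplits : Splits (P.map (algebraMap K F)) := by
    rw [splits_iff_card_roots, hPF, FiniteField.roots_X_pow_card_sub_X,
      FiniteField.X_pow_card_sub_X_natDegree_eq F hq]
    rfl
  have hgP : g ∣ P := EuclideanDomain.gcd_dvd_right U P
  have hg0 : g ≠ 0 := fun h =>
    hP0 (by rw [(EuclideanDomain.gcd_eq_zero_iff.mp h).2, Polynomial.map_zero])
  have hroots : (g.rootSet F).toFinset = ({w : F | aeval w U = 0} : Finset F) := by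
    ext w
    have hPw : aeval w P = 0 := by simp [P, FiniteField.pow_card]
    rw [Set.mem_toFinset, mem_rootSet, mem_filter, aeval_def, hg, root_gcd_iff_root_left_right,
      ← aeval_def, ← aeval_def, hPw]
    exact ⟨fun h => ⟨mem_univ w, h.2.1⟩, fun h => ⟨hg0, h.2, rfl⟩⟩
  rw [← hroots, Set.toFinset_card, card_rootSet_eq_natDegree (hPsep.of_dvd hgP)
    (hPsplits.of_dvd hP0 (Polynomial.map_dvd _ hgP))]

lemma sum_insert_insert_add {G M : Type*} [AddCancelCommMonoid G] [DecidableEq G]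
    [AddCommMonoid M] {a b : G} (ha : a ≠ 0) (hb : b ≠ 0) (hab : a ≠ b) (f : G → M) :
    ∑ x ∈ {a, b, a + b}, f x = f a + f b + f (a + b) := by
  rw [sum_insert, sum_insert, sum_singleton, add_assoc]
  · simpa using ha
  · simpa [hab] using hb

section FiniteField

variable {F : Type*} [Field F] [Fintype F] [DecidableEq F]

def zeroSumTriples (t : ℕ) : Finset (Finset F) :=
  {s ∈ powersetCard 3 {x | x ≠ 0} | ∑ x ∈ s, x = 0 ∧ ∑ x ∈ s, x ^ t = 0}

def zeroSumPairs (t : ℕ) : Finset (F × F) :=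
  {p | p.1 ≠ 0 ∧ p.2 ≠ 0 ∧ p.1 ≠ p.2 ∧ p.1 ^ t + p.2 ^ t + (p.1 + p.2) ^ t = 0}

def nontrivialRoots (t : ℕ) : Finset F :=
  {w | w ≠ 0 ∧ w ≠ 1 ∧ 1 + w ^ t + (1 + w) ^ t = 0}

lemma card_filter_ne_zero : #{x : F | x ≠ 0} = Fintype.card F - 1 := by
  rw [filter_ne', card_erase_of_mem (mem_univ 0), card_univ]

lemma mk_mul_mem_zeroSumPairs_iff {t : ℕ} {a w : F} (ha : a ≠ 0) :
    (a, a * w) ∈ zeroSumPairs t ↔ w ∈ nontrivialRoots t := by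
  have hpow : a ^ t + (a * w) ^ t + (a + a * w) ^ t = a ^ t * (1 + w ^ t + (1 + w) ^ t) := by
    rw [show a + a * w = a * (1 + w) by ring, mul_pow, mul_pow]
    ring
  simp [zeroSumPairs, nontrivialRoots, ha, hpow, eq_comm (a := a)]

lemma card_zeroSumPairs (t : ℕ) :
    #(zeroSumPairs (F := F) t) = (Fintype.card F - 1) * #(nontrivialRoots (F := F) t) := by
  have hne : ∀ p ∈ zeroSumPairs (F := F) t, p.1 ≠ 0 := fun p hp => (mem_filter.mp hp).2.1
  rw [← card_filter_ne_zero, ← card_product]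
  refine card_nbij' (fun p => (p.1, p.2 / p.1)) (fun p => (p.1, p.1 * p.2)) ?_ ?_ ?_ ?_
  · rintro ⟨a, b⟩ hp
    have ha := hne _ hp
    rw [coe_product, Set.mem_prod]
    refine ⟨by simpa using ha, ?_⟩
    rw [← mul_div_cancel₀ b ha] at hp
    exact (mk_mul_mem_zeroSumPairs_iff ha).mp hp
  · rintro ⟨a, w⟩ hp
    rw [coe_product, Set.mem_prod, mem_coe, mem_filter] at hp
    exact (mk_mul_mem_zeroSumPairs_iff hp.1.2).mpr hp.2
  · rintro ⟨a, b⟩ hp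
    simp [mul_div_cancel₀ b (hne _ hp)]
  · rintro ⟨a, w⟩ hp
    rw [coe_product, Set.mem_prod, mem_coe, mem_filter] at hp
    simp [mul_div_cancel_left₀ w hp.1.2]

variable [CharP F 2]

lemma eq_insert_insert_add_of_mem_zeroSumTriples {t : ℕ} {s : Finset F}
    (hs : s ∈ zeroSumTriples t) {a b : F} (ha : a ∈ s) (hb : b ∈ s) (hab : a ≠ b) :
    s = {a, b, a + b} := by
  obtain ⟨⟨-, hcard⟩, hsum, -⟩ := (mem_filter.mp hs).imp_left mem_powersetCard.mp
  have hb' : b ∈ s.erase a := mem_erase.mpr ⟨hab.symm, hb⟩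
  obtain ⟨c, hc⟩ : ∃ c, (s.erase a).erase b = {c} := card_eq_one.mp <| by
    rw [card_erase_of_mem hb', card_erase_of_mem ha, hcard]
  have habc : a + (b + c) = 0 := by
    rw [← hsum, ← add_sum_erase s _ ha, ← add_sum_erase _ _ hb', hc, sum_singleton]
  have hc_eq : c = a + b := by
    linear_combination habc - (a + b) * CharTwo.two_eq_zero (R := F)
  rw [← insert_erase ha, ← insert_erase hb', hc, hc_eq]

lemma mk_mem_zeroSumPairs_iff {t : ℕ} {a b : F} (hab : a ≠ b) :
    (a, b) ∈ zeroSumPairs t ↔ {a, b, a + b} ∈ zeroSumTriples t := by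
  simp only [zeroSumPairs, zeroSumTriples, mem_filter, mem_univ, true_and, mem_powersetCard]
  constructor
  · rintro ⟨ha, hb, -, hpow⟩
    have hab0 : a + b ≠ 0 := fun h => hab (CharTwo.add_eq_zero.mp h)
    refine ⟨⟨?_, ?_⟩, ?_, ?_⟩
    · intro x hx
      simp only [mem_insert, mem_singleton] at hx
      rcases hx with rfl | rfl | rfl <;> simpa
    · exact card_eq_three.mpr ⟨a, b, a + b, hab, by simpa using hb, by simpa using ha, rfl⟩
    · rw [sum_insert_insert_add ha hb hab, CharTwo.add_self_eq_zero]
    · rw [sum_insert_insert_add ha hb hab, hpow]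
  · rintro ⟨⟨hsub, -⟩, -, hpow⟩
    have ha : a ≠ 0 := by simpa using hsub (by simp : a ∈ _)
    have hb : b ≠ 0 := by simpa using hsub (by simp : b ∈ _)
    exact ⟨ha, hb, hab, by rwa [sum_insert_insert_add ha hb hab] at hpow⟩

lemma zeroSumPairs_eq_biUnion_offDiag (t : ℕ) :
    zeroSumPairs (F := F) t = (zeroSumTriples t).biUnion offDiag := by
  ext ⟨a, b⟩
  rw [mem_biUnion]
  constructor
  · intro h
    have hab : a ≠ b := (mem_filter.mp h).2.2.2.1
    exact ⟨{a, b, a + b}, (mk_mem_zeroSumPairs_iff hab).mp h, by simp [hab]⟩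
  · rintro ⟨s, hs, hab⟩
    obtain ⟨ha, hb, hab⟩ := mem_offDiag.mp hab
    rw [mk_mem_zeroSumPairs_iff hab, ← eq_insert_insert_add_of_mem_zeroSumTriples hs ha hb hab]
    exact hs

lemma card_zeroSumPairs_eq_six_mul (t : ℕ) :
    #(zeroSumPairs (F := F) t) = 6 * #(zeroSumTriples (F := F) t) := by
  rw [zeroSumPairs_eq_biUnion_offDiag, card_biUnion, sum_const_nat, mul_comm]
  · intro s hs
    rw [offDiag_card, (mem_powersetCard.mp (mem_filter.mp hs).1).2]
  · intro s hs s' hs' hne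
    refine disjoint_left.mpr fun ⟨a, b⟩ h h' => hne ?_
    obtain ⟨ha, hb, hab⟩ := mem_offDiag.mp h
    obtain ⟨ha', hb', -⟩ := mem_offDiag.mp h'
    rw [eq_insert_insert_add_of_mem_zeroSumTriples hs ha hb hab,
      eq_insert_insert_add_of_mem_zeroSumTriples hs' ha' hb' hab]

lemma card_roots_eq_card_nontrivialRoots_add_two {K : Type*} [Field K] [Algebra K F] {t : ℕ}
    (ht : 0 < t) :
    #{w : F | aeval w (1 + X ^ t + (1 + X) ^ t : K[X]) = 0}
      = #(nontrivialRoots (F := F) t) + 2 := by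
  have h11 : (1 : F) + 1 = 0 := CharTwo.add_self_eq_zero 1
  have hroots : ({w : F | aeval w (1 + X ^ t + (1 + X) ^ t : K[X]) = 0} : Finset F)
      = insert 0 (insert 1 (nontrivialRoots t)) := by
    ext w
    by_cases h0 : w = 0
    · simp [h0, zero_pow ht.ne', h11]
    by_cases h1 : w = 1
    · simp [h1, zero_pow ht.ne', h11]
    simp [nontrivialRoots, h0, h1]
  rw [hroots, card_insert_of_notMem, card_insert_of_notMem] <;> simp [nontrivialRoots]

end FiniteField

section PrimitiveElement

variable {F : Type*} [Field F] [Fintype F] {γ : F} {n : ℕ}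

lemma image_pow_eq_filter_ne_zero [DecidableEq F] (hγ : ∀ x : F, x ≠ 0 → ∃ k : ℕ, γ ^ k = x)
    (hn : n = Fintype.card F - 1) :
    univ.image (fun i : Fin n => γ ^ (i : ℕ)) = ({x | x ≠ 0} : Finset F) := by
  have hn0 : 0 < n := by have := Fintype.one_lt_card (α := F); omega
  have hsub : ({x | x ≠ 0} : Finset F) ⊆ univ.image (fun i : Fin n => γ ^ (i : ℕ)) := by
    intro x hx
    obtain ⟨k, rfl⟩ := hγ x (mem_filter.mp hx).2
    refine mem_image.mpr ⟨⟨k % n, Nat.mod_lt k hn0⟩, mem_univ _, ?_⟩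
    by_cases hγ0 : γ = 0
    · obtain rfl : k = 0 := by
        by_contra hk
        exact (mem_filter.mp hx).2 (by rw [hγ0, zero_pow hk])
      simp
    · exact (pow_eq_pow_mod k (hn ▸ FiniteField.pow_card_sub_one_eq_one γ hγ0)).symm
  refine (eq_of_subset_of_card_le hsub ?_).symm
  rw [card_filter_ne_zero, ← hn]
  exact card_image_le.trans (by simp)

lemma pow_injective_of_forall_exists_pow_eq (hγ : ∀ x : F, x ≠ 0 → ∃ k : ℕ, γ ^ k = x)
    (hn : n = Fintype.card F - 1) : Function.Injective (fun i : Fin n => γ ^ (i : ℕ)) := by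
  classical
  have hcard : #(univ.image fun i : Fin n => γ ^ (i : ℕ)) = #(univ : Finset (Fin n)) := by
    rw [image_pow_eq_filter_ne_zero hγ hn, card_filter_ne_zero, card_univ, Fintype.card_fin, hn]
  exact Set.injOn_univ.mp (by simpa using card_image_iff.mp hcard)

end PrimitiveElement

lemma ZMod.eq_zero_or_eq_one_of_two (a : ZMod 2) : a = 0 ∨ a = 1 := by
  revert a
  decide

lemma sum_algebraMap_mul_eq_sum_filter {ι R : Type*} [Fintype ι] [Semiring R]
    [Algebra (ZMod 2) R] (c : ι → ZMod 2) (f : ι → R) :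
    ∑ i, algebraMap (ZMod 2) R (c i) * f i = ∑ i ∈ {i | c i ≠ 0}, f i := by
  rw [sum_filter]
  refine sum_congr rfl fun i _ => ?_
  rcases ZMod.eq_zero_or_eq_one_of_two (c i) with h | h <;> simp [h]

def funZModTwoEquivFinset (ι : Type*) [Fintype ι] [DecidableEq ι] :
    (ι → ZMod 2) ≃ Finset ι where
  toFun c := {i | c i ≠ 0}
  invFun s i := if i ∈ s then 1 else 0
  left_inv c := by
    funext i
    rcases ZMod.eq_zero_or_eq_one_of_two (c i) with h | h <;> simp [h]
  right_inv s := by ext i; by_cases h : i ∈ s <;> simp [h]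

lemma natCard_subtype_filter_ne_zero {ι : Type*} [Fintype ι] [DecidableEq ι]
    (P : Finset ι → Prop) [DecidablePred P] :
    Nat.card {c : ι → ZMod 2 // P {i | c i ≠ 0}} = #{s | P s} := by
  rw [← Fintype.card_subtype, ← Nat.card_eq_fintype_card]
  exact Nat.card_congr (Equiv.subtypeEquiv (funZModTwoEquivFinset ι) fun _ => Iff.rfl)

lemma natCard_codewords_eq_card_zeroSumTriples {F : Type*} [Field F] [Fintype F] [DecidableEq F]
    [Algebra (ZMod 2) F] {γ : F} (hγ : ∀ x : F, x ≠ 0 → ∃ k : ℕ, γ ^ k = x) {n : ℕ}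
    (hn : n = Fintype.card F - 1) (t : ℕ) :
    Nat.card {c : Fin n → ZMod 2 //
        (∑ i : Fin n, algebraMap (ZMod 2) F (c i) * γ ^ (i : ℕ) = 0) ∧
        (∑ i : Fin n, algebraMap (ZMod 2) F (c i) * γ ^ (t * (i : ℕ)) = 0) ∧
        #{i | c i ≠ 0} = 3} = #(zeroSumTriples (F := F) t) := by
  simp only [sum_algebraMap_mul_eq_sum_filter]
  rw [natCard_subtype_filter_ne_zero fun s : Finset (Fin n) =>
    ∑ i ∈ s, γ ^ (i : ℕ) = 0 ∧ ∑ i ∈ s, γ ^ (t * (i : ℕ)) = 0 ∧ #s = 3]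
  let e : Fin n ↪ F := ⟨_, pow_injective_of_forall_exists_pow_eq hγ hn⟩
  have he : univ.map e = ({x | x ≠ 0} : Finset F) := by
    rw [map_eq_image]
    exact image_pow_eq_filter_ne_zero hγ hn
  rw [zeroSumTriples, ← he, powersetCard_map, filter_map, card_map]
  congr 1
  ext s
  simp only [mem_filter, mem_univ, true_and, RelEmbedding.coe_toEmbedding, Function.comp_apply,
    mapEmbedding_apply, sum_map, Function.Embedding.coeFn_mk, mem_powersetCard, subset_univ, e,
    pow_mul']
  exact and_rotate.symm

open Polynomial in
theorem stmt_12_general (m t : ℕ) (ht : 0 < t)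
    (F : Type) [Field F] [Fintype F] [Algebra (ZMod 2) F]
    (hcard : Fintype.card F = 2 ^ m)
    (γ : F) (hγ : ∀ x : F, x ≠ 0 → ∃ k : ℕ, γ ^ k = x)
    (n : ℕ) (hn : n = 2 ^ m - 1) :
    6 * Nat.card {c : Fin n → ZMod 2 //
        (∑ i : Fin n, algebraMap (ZMod 2) F (c i) * γ ^ (i : ℕ) = 0) ∧
        (∑ i : Fin n, algebraMap (ZMod 2) F (c i) * γ ^ (t * (i : ℕ)) = 0) ∧
        (Finset.univ.filter fun i => c i ≠ 0).card = 3}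
      = (2 ^ m - 1) *
        ((EuclideanDomain.gcd (1 + X ^ t + (1 + X) ^ t : Polynomial (ZMod 2))
            (X ^ (2 ^ m) + X)).natDegree - 2) := by
  classical
  have : CharP F 2 := charP_of_injective_algebraMap (algebraMap (ZMod 2) F).injective 2
  have hX : (X ^ (2 ^ m) + X : (ZMod 2)[X]) = X ^ Fintype.card F - X := by
    rw [hcard, sub_eq_add_neg, CharTwo.neg_eq]
  have hdeg : (EuclideanDomain.gcd (1 + X ^ t + (1 + X) ^ t : Polynomial (ZMod 2))
      (X ^ (2 ^ m) + X)).natDegree = #(nontrivialRoots (F := F) t) + 2 := by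
    rw [hX]
    exact (natDegree_gcd_X_pow_card_sub_X _).trans (card_roots_eq_card_nontrivialRoots_add_two ht)
  rw [hdeg, Nat.add_sub_cancel, natCard_codewords_eq_card_zeroSumTriples hγ (hcard ▸ hn) t,
    ← hcard, ← card_zeroSumPairs, card_zeroSumPairs_eq_six_mul]

open Polynomial in
/-- if `C_{1,t}` has no codewords of weight 1 or 2, then the number of its
weight-3 codewords equals `(q-1)·(deg(gcd(U_t, x^q + x)) - 2)/6`. -/
theorem stmt_12 (m t : ℕ) (hm : 0 < m) (ht : 0 < t)
    (F : Type) [Field F] [Fintype F] [Algebra (ZMod 2) F]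
    (hcard : Fintype.card F = 2 ^ m)
    (γ : F) (hγ : ∀ x : F, x ≠ 0 → ∃ k : ℕ, γ ^ k = x)
    (n : ℕ) (hn : n = 2 ^ m - 1)
    (hno12 : ¬ ∃ c : Fin n → ZMod 2,
        (∑ i : Fin n, algebraMap (ZMod 2) F (c i) * γ ^ (i : ℕ) = 0) ∧
        (∑ i : Fin n, algebraMap (ZMod 2) F (c i) * γ ^ (t * (i : ℕ)) = 0) ∧
        ((Finset.univ.filter fun i => c i ≠ 0).card = 1 ∨
          (Finset.univ.filter fun i => c i ≠ 0).card = 2)) :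
    6 * Nat.card {c : Fin n → ZMod 2 //
        (∑ i : Fin n, algebraMap (ZMod 2) F (c i) * γ ^ (i : ℕ) = 0) ∧
        (∑ i : Fin n, algebraMap (ZMod 2) F (c i) * γ ^ (t * (i : ℕ)) = 0) ∧
        (Finset.univ.filter fun i => c i ≠ 0).card = 3}
      = (2 ^ m - 1) *
        ((EuclideanDomain.gcd (1 + X ^ t + (1 + X) ^ t : Polynomial (ZMod 2))
            (X ^ (2 ^ m) + X)).natDegree - 2) :=
  stmt_12_general m t ht F hcard γ hγ n hn
end

section
/- Let q = 2^m and t ≥ 3 such that x^{q} + x and U_t(x) = 1 + x^t + (1+x)^t share a common root in F_q \ {0,1} corresponding to some α = γ^i. Then for each root α = γ^i of U_t in F_q \ {0,1}, the word 1 + x^i + x^j, where γ^j = 1 + γ^i, is a codeword of weight 3 in C_{1,t}, and the roots come in pairs {γ^i, γ^j} producing the same codeword. -/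
/-!
In characteristic 2 the substitution `x ↦ 1 + x` is an involution fixing `U_t = 1 + x^t + (1 + x)^t`,
so it pairs the root `α = γ^i` with `1 + α = γ^j`. The word `1 + x^i + x^j` evaluates at `γ` to
`1 + α + (1 + α) = 0` and at `γ^t` to `1 + α^t + (1 + α)^t = U_t(α) = 0`; its three exponents are
distinct since `0 < i, j` and `γ^j = 1 + γ^i ≠ γ^i`.
-/

open Polynomial Finset

lemma charP_two_of_algebra_zmod_two (F : Type*) [Field F] [Algebra (ZMod 2) F] : CharP F 2 :=
  charP_of_injective_algebraMap (algebraMap (ZMod 2) F).injective 2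

lemma aeval_one_add_eq_of_one_add_X_pow_add_one_add_X_pow {R : Type*} [CommRing R]
    [Algebra (ZMod 2) R] [CharP R 2] (t : ℕ) (a : R) :
    aeval (1 + a) (1 + X ^ t + (1 + X) ^ t : (ZMod 2)[X]) =
      aeval a (1 + X ^ t + (1 + X) ^ t : (ZMod 2)[X]) := by
  simp only [map_add, map_one, map_pow, aeval_X, CharTwo.add_cancel_left]
  ring

lemma sum_algebraMap_ite_mem_mul {ι R A : Type*} [Fintype ι] [DecidableEq ι] [CommSemiring R]
    [Semiring A] [Algebra R A] (s : Finset ι) (e : ι → A) :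
    ∑ k, algebraMap R A (if k ∈ s then 1 else 0) * e k = ∑ k ∈ s, e k := by
  simp only [apply_ite (algebraMap R A), map_one, map_zero, ite_mul, one_mul, zero_mul,
    sum_ite_mem, univ_inter]

lemma filter_ite_mem_ne_zero {ι R : Type*} [Fintype ι] [DecidableEq ι] [Zero R] [One R]
    [DecidableEq R] [NeZero (1 : R)] (s : Finset ι) :
    univ.filter (fun k => (if k ∈ s then (1 : R) else 0) ≠ 0) = s := by
  ext k
  by_cases hk : k ∈ s <;> simp [hk]

open Polynomial in
theorem stmt_13_general (t : ℕ)
    (F : Type) [Field F] [Algebra (ZMod 2) F]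
    (γ : F)
    (n : ℕ)
    (i j : ℕ) (hi : 0 < i) (hin : i < n) (hj : 0 < j) (hjn : j < n)
    (hroot : Polynomial.aeval (γ ^ i) (1 + X ^ t + (1 + X) ^ t : Polynomial (ZMod 2)) = 0)
    (hij : γ ^ j = 1 + γ ^ i)
    (c : Fin n → ZMod 2)
    (hc : ∀ k : Fin n, c k = if (k : ℕ) = 0 ∨ (k : ℕ) = i ∨ (k : ℕ) = j then 1 else 0) :
    (∑ k : Fin n, algebraMap (ZMod 2) F (c k) * γ ^ (k : ℕ) = 0) ∧
    (∑ k : Fin n, algebraMap (ZMod 2) F (c k) * γ ^ (t * (k : ℕ)) = 0) ∧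
    (Finset.univ.filter fun k => c k ≠ 0).card = 3 ∧
    Polynomial.aeval (γ ^ j) (1 + X ^ t + (1 + X) ^ t : Polynomial (ZMod 2)) = 0 := by
  have := charP_two_of_algebra_zmod_two F
  have hij_ne : i ≠ j := by
    rintro rfl
    simp at hij
  set s : Finset (Fin n) := {⟨0, hi.trans hin⟩, ⟨i, hin⟩, ⟨j, hjn⟩}
  have hcs : c = fun k => if k ∈ s then 1 else 0 := by
    ext k
    simp [hc, s, Fin.ext_iff]
  have hs : ∀ e : ℕ → F, ∑ k ∈ s, e k = e 0 + e i + e j := by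
    intro e
    rw [sum_insert (by simp [Fin.ext_iff, hi.ne, hj.ne]), sum_pair (by simpa [Fin.ext_iff]),
      add_assoc]
  have hsum : ∀ e : ℕ → F, ∑ k, algebraMap (ZMod 2) F (c k) * e k = e 0 + e i + e j := by
    intro e
    rw [hcs, sum_algebraMap_ite_mem_mul s (e ·), hs]
  refine ⟨?_, ?_, ?_, ?_⟩
  · rw [hsum (γ ^ ·), hij, pow_zero, CharTwo.add_self_eq_zero]
  · rw [hsum (fun k => γ ^ (t * k))]
    simpa [pow_mul', hij] using hroot
  · rw [hcs, filter_ite_mem_ne_zero, card_eq_three]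
    exact ⟨_, _, _, by simp [Fin.ext_iff, hi.ne], by simp [Fin.ext_iff, hj.ne],
      by simpa [Fin.ext_iff], rfl⟩
  · rwa [hij, aeval_one_add_eq_of_one_add_X_pow_add_one_add_X_pow]

open Polynomial in
/-- if `α = γ^i` is a root of `U_t` in `F_q \ {0,1}` and `γ^j = 1 + γ^i`,
then `1 + x^i + x^j` is a weight-3 codeword of `C_{1,t}`, and `γ^j` is also a root of `U_t`
(the roots pair up, producing the same codeword). -/
theorem stmt_13 (m t : ℕ) (hm : 0 < m) (ht : 3 ≤ t)
    (F : Type) [Field F] [Fintype F] [Algebra (ZMod 2) F]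
    (hcard : Fintype.card F = 2 ^ m)
    (γ : F) (hγ : ∀ x : F, x ≠ 0 → ∃ k : ℕ, γ ^ k = x)
    (n : ℕ) (hn : n = 2 ^ m - 1)
    (i j : ℕ) (hi : 0 < i) (hin : i < n) (hj : 0 < j) (hjn : j < n)
    (hne0 : γ ^ i ≠ 0) (hne1 : γ ^ i ≠ 1)
    (hroot : Polynomial.aeval (γ ^ i) (1 + X ^ t + (1 + X) ^ t : Polynomial (ZMod 2)) = 0)
    (hij : γ ^ j = 1 + γ ^ i)
    (c : Fin n → ZMod 2)
    (hc : ∀ k : Fin n, c k = if (k : ℕ) = 0 ∨ (k : ℕ) = i ∨ (k : ℕ) = j then 1 else 0) :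
    (∑ k : Fin n, algebraMap (ZMod 2) F (c k) * γ ^ (k : ℕ) = 0) ∧
    (∑ k : Fin n, algebraMap (ZMod 2) F (c k) * γ ^ (t * (k : ℕ)) = 0) ∧
    (Finset.univ.filter fun k => c k ≠ 0).card = 3 ∧
    Polynomial.aeval (γ ^ j) (1 + X ^ t + (1 + X) ^ t : Polynomial (ZMod 2)) = 0 :=
  stmt_13_general t F γ n i j hi hin hj hjn hroot hij c hc
end
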